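/- The polygonal chain with vertices (2,2), (0,0), (0,3), (3,0), (1,0) is a covering trail for the grid G_3^2 with exactly 4 edges whose total length equals 5·(1 + √2). -/

import Mathlib

noncomputable section

/-- Points of the Euclidean plane. -/
abbrev Pt : Type := EuclideanSpace ℝ (Fin 2)

/-- The point `(x, y)` of the plane. -/
def pt (x y : ℝ) : Pt := !₂[x, y]

/-- The grid `G_n^2 = {0, 1, …, n-1} × {0, 1, …, n-1}` as a subset of the plane. -/
def grid (n : ℕ) : Set Pt :=
  {p | ∃ a b : ℕ, a < n ∧ b < n ∧ p = pt a b}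

/-- The parametrization `γ : [0, k] → ℝ²` of the polygonal chain with vertices
`v 0, v 1, …, v k`:  for `t ∈ [i, i+1]`, `γ t = (i+1-t) • v i + (t-i) • v (i+1)`. -/
def chainParam (v : ℕ → Pt) (t : ℝ) : Pt :=
  (1 - (t - (⌊t⌋₊ : ℝ))) • v ⌊t⌋₊ + (t - (⌊t⌋₊ : ℝ)) • v (⌊t⌋₊ + 1)

/-- `v 0, v 1, …, v k` are the vertices of a polygonal chain with `k` edges:
consecutive vertices are distinct, the `k` edges (as segments) are pairwise
distinct, and no two consecutive edges are collinear (`v (i+2)` never lies on the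
line through `v i` and `v (i+1)`). -/
def IsPolyChain (k : ℕ) (v : ℕ → Pt) : Prop :=
  (∀ i < k, v i ≠ v (i + 1)) ∧
  (∀ i < k, ∀ j < k, i ≠ j →
      segment ℝ (v i) (v (i + 1)) ≠ segment ℝ (v j) (v (j + 1))) ∧
  (∀ i, i + 2 ≤ k → v (i + 2) ∉ affineSpan ℝ {v i, v (i + 1)})

/-- A covering trail for `G_n^2` with `k` edges: a polygonal chain such that every
grid point equals `γ t` for at least one `t ∈ [0, k]`. -/
def IsCoveringTrail (n k : ℕ) (v : ℕ → Pt) : Prop :=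
  IsPolyChain k v ∧
  ∀ p ∈ grid n, ∃ t ∈ Set.Icc (0 : ℝ) (k : ℝ), chainParam v t = p

/-- A covering path for `G_n^2` with `k` edges: a covering trail such that every
grid point equals `γ t` for exactly one `t ∈ [0, k]`. -/
def IsCoveringPath (n k : ℕ) (v : ℕ → Pt) : Prop :=
  IsCoveringTrail n k v ∧
  ∀ p ∈ grid n, ∃! t, t ∈ Set.Icc (0 : ℝ) (k : ℝ) ∧ chainParam v t = p

/-- A covering circuit for `G_n^2` with `k` edges: a covering trail that is closed
(`v 0 = v k`) and whose last and first edges are also non-collinear. -/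
def IsCoveringCircuit (n k : ℕ) (v : ℕ → Pt) : Prop :=
  IsCoveringTrail n k v ∧ v 0 = v k ∧
  v 1 ∉ affineSpan ℝ {v (k - 1), v k}

/-- A covering cycle for `G_n^2` with `k` edges: a covering circuit such that every
grid point equals `γ t` for exactly one `t ∈ [0, k)`. -/
def IsCoveringCycle (n k : ℕ) (v : ℕ → Pt) : Prop :=
  IsCoveringCircuit n k v ∧
  ∀ p ∈ grid n, ∃! t, t ∈ Set.Ico (0 : ℝ) (k : ℝ) ∧ chainParam v t = p

/-- The total (Euclidean) length of the polygonal chain with vertices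
`v 0, v 1, …, v k`. -/
def chainLength (k : ℕ) (v : ℕ → Pt) : ℝ :=
  ∑ i ∈ Finset.range k, dist (v i) (v (i + 1))

/-! ### Auxiliary lemmas -/

lemma pt_eq_iff {x y x' y' : ℝ} : pt x y = pt x' y' ↔ x = x' ∧ y = y' := by
  constructor
  · intro h
    exact ⟨by simpa [pt] using congrArg (fun p : Pt => p 0) h, by simpa [pt] using congrArg (fun p : Pt => p 1) h⟩
  · rintro ⟨rfl, rfl⟩; rfl

lemma smul_pt (a x y : ℝ) : a • pt x y = pt (a*x) (a*y) := by
  ext i; fin_cases i <;> simp [pt]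

lemma add_pt (x y x' y' : ℝ) : pt x y + pt x' y' = pt (x+x') (y+y') := by
  ext i; fin_cases i <;> simp [pt]

lemma sub_pt (x y x' y' : ℝ) : pt x y - pt x' y' = pt (x-x') (y-y') := by
  ext i; fin_cases i <;> simp [pt]

lemma dist_pt (x y x' y' : ℝ) :
    dist (pt x y) (pt x' y') = Real.sqrt ((x-x')^2 + (y-y')^2) := by
  simp [EuclideanSpace.dist_eq, Fin.sum_univ_two, pt, Real.dist_eq, sq_abs]

lemma not_mem_line {p A B : Pt} (h : ∀ r : ℝ, r • (B - A) + A ≠ p) :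
    p ∉ affineSpan ℝ {A, B} := by
  intro hm
  have h2 : (p - A) +ᵥ A ∈ affineSpan ℝ ({A, B} : Set Pt) := by
    simpa [vadd_eq_add, sub_add_cancel] using hm
  obtain ⟨r, hr⟩ := vadd_left_mem_affineSpan_pair.mp h2
  exact h r (by rw [show B - A = B -ᵥ A from rfl, hr]; simp [vsub_eq_sub, vadd_eq_add])

/-- The vertex function of the chain considered here. -/
def vlist : ℕ → Pt := fun i => [pt 2 2, pt 0 0, pt 0 3, pt 3 0, pt 1 0].getD i (pt 0 0)

lemma vlist0 : vlist 0 = pt 2 2 := rfl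
lemma vlist1 : vlist 1 = pt 0 0 := rfl
lemma vlist2 : vlist 2 = pt 0 3 := rfl
lemma vlist3 : vlist 3 = pt 3 0 := rfl
lemma vlist4 : vlist 4 = pt 1 0 := rfl
lemma vlist5 : vlist 5 = pt 0 0 := rfl

lemma chainParam_eval (v : ℕ → Pt) (t : ℝ) (n : ℕ) (h : ⌊t⌋₊ = n) :
    chainParam v t = (1 - (t - n)) • v n + (t - n) • v (n+1) := by
  simp [chainParam, h]

/-- Helper: a point is covered by the chain at parameter `t`. -/
lemma vlist_cover (t : ℝ) (n : ℕ) (hf : ⌊t⌋₊ = n) (x y : ℝ)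
    (h : (1 - (t - n)) • vlist n + (t - n) • vlist (n+1) = pt x y)
    (h0 : 0 ≤ t) (h4 : t ≤ 4) :
    ∃ s ∈ Set.Icc (0:ℝ) ((4:ℕ):ℝ), chainParam vlist s = pt x y := by
  exact ⟨t, ⟨h0, by exact_mod_cast h4⟩, by rw [chainParam_eval vlist t n hf]; exact h⟩

/-- The polygonal chain with vertices `(2,2), (0,0), (0,3), (3,0), (1,0)` is a
covering trail for `G_3^2` with exactly `4` edges whose total length equals
`5 (1 + √2)`. -/
theorem stmt13 :
    IsCoveringTrail 3 4
      (fun i => [pt 2 2, pt 0 0, pt 0 3, pt 3 0, pt 1 0].getD i (pt 0 0)) ∧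
    chainLength 4
      (fun i => [pt 2 2, pt 0 0, pt 0 3, pt 3 0, pt 1 0].getD i (pt 0 0))
      = 5 * (1 + Real.sqrt 2) := by
  show IsCoveringTrail 3 4 vlist ∧ chainLength 4 vlist = 5 * (1 + Real.sqrt 2)
  constructor
  · constructor
    · refine ⟨?_, ?_, ?_⟩
      · -- consecutive vertices distinct
        intro i hi
        interval_cases i <;> rw [Ne] <;>
          norm_num [vlist0, vlist1, vlist2, vlist3, vlist4, pt_eq_iff]
      · -- segments pairwise distinct
        have m0 : pt 2 2 ∈ segment ℝ (vlist 0) (vlist 1) := by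
          rw [vlist0]; exact left_mem_segment ℝ _ _
        have m1 : pt 0 0 ∈ segment ℝ (vlist 1) (vlist 2) := by
          rw [vlist1]; exact left_mem_segment ℝ _ _
        have m1' : pt 0 3 ∈ segment ℝ (vlist 1) (vlist 2) := by
          rw [vlist2]; exact right_mem_segment ℝ _ _
        have m2 : pt 0 3 ∈ segment ℝ (vlist 2) (vlist 3) := by
          rw [vlist2]; exact left_mem_segment ℝ _ _
        have n221 : pt 2 2 ∉ segment ℝ (vlist 1) (vlist 2) := by
          rw [vlist1, vlist2]
          rintro ⟨a, b, ha, hb, hab, h⟩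
          rw [smul_pt, smul_pt, add_pt, pt_eq_iff] at h
          obtain ⟨h1, h2⟩ := h; linarith
        have n222 : pt 2 2 ∉ segment ℝ (vlist 2) (vlist 3) := by
          rw [vlist2, vlist3]
          rintro ⟨a, b, ha, hb, hab, h⟩
          rw [smul_pt, smul_pt, add_pt, pt_eq_iff] at h
          obtain ⟨h1, h2⟩ := h; linarith
        have n223 : pt 2 2 ∉ segment ℝ (vlist 3) (vlist 4) := by
          rw [vlist3, vlist4]
          rintro ⟨a, b, ha, hb, hab, h⟩
          rw [smul_pt, smul_pt, add_pt, pt_eq_iff] at h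
          obtain ⟨h1, h2⟩ := h; linarith
        have n002 : pt 0 0 ∉ segment ℝ (vlist 2) (vlist 3) := by
          rw [vlist2, vlist3]
          rintro ⟨a, b, ha, hb, hab, h⟩
          rw [smul_pt, smul_pt, add_pt, pt_eq_iff] at h
          obtain ⟨h1, h2⟩ := h; linarith
        have n033 : pt 0 3 ∉ segment ℝ (vlist 3) (vlist 4) := by
          rw [vlist3, vlist4]
          rintro ⟨a, b, ha, hb, hab, h⟩
          rw [smul_pt, smul_pt, add_pt, pt_eq_iff] at h
          obtain ⟨h1, h2⟩ := h; linarith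
        have h01 : segment ℝ (vlist 0) (vlist 1) ≠ segment ℝ (vlist 1) (vlist 2) :=
          fun h => n221 (h ▸ m0)
        have h02 : segment ℝ (vlist 0) (vlist 1) ≠ segment ℝ (vlist 2) (vlist 3) :=
          fun h => n222 (h ▸ m0)
        have h03 : segment ℝ (vlist 0) (vlist 1) ≠ segment ℝ (vlist 3) (vlist 4) :=
          fun h => n223 (h ▸ m0)
        have h12 : segment ℝ (vlist 1) (vlist 2) ≠ segment ℝ (vlist 2) (vlist 3) :=
          fun h => n002 (h ▸ m1)
        have h13 : segment ℝ (vlist 1) (vlist 2) ≠ segment ℝ (vlist 3) (vlist 4) :=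
          fun h => n033 (h ▸ m1')
        have h23 : segment ℝ (vlist 2) (vlist 3) ≠ segment ℝ (vlist 3) (vlist 4) :=
          fun h => n033 (h ▸ m2)
        intro i hi j hj hij
        interval_cases i <;> interval_cases j <;>
          first
            | exact absurd rfl hij
            | exact h01 | exact h02 | exact h03 | exact h12 | exact h13 | exact h23
            | exact h01.symm | exact h02.symm | exact h03.symm
            | exact h12.symm | exact h13.symm | exact h23.symm
      · -- no two consecutive edges collinear
        intro i hi
        have hi2 : i ≤ 2 := by omega
        interval_cases i
        · show vlist 2 ∉ _
          rw [vlist0, vlist1, vlist2]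
          refine not_mem_line fun r => ?_
          rw [sub_pt, smul_pt, add_pt, Ne, pt_eq_iff]
          rintro ⟨h1, h2⟩; linarith
        · show vlist 3 ∉ _
          rw [vlist1, vlist2, vlist3]
          refine not_mem_line fun r => ?_
          rw [sub_pt, smul_pt, add_pt, Ne, pt_eq_iff]
          rintro ⟨h1, h2⟩; linarith
        · show vlist 4 ∉ _
          rw [vlist2, vlist3, vlist4]
          refine not_mem_line fun r => ?_
          rw [sub_pt, smul_pt, add_pt, Ne, pt_eq_iff]
          rintro ⟨h1, h2⟩; linarith
    · -- coverage
      rintro p ⟨a, b, ha, hb, rfl⟩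
      interval_cases a <;> interval_cases b
      · -- (0,0) at t = 1
        push_cast
        refine vlist_cover 1 1 (by norm_num) 0 0 ?_ (by norm_num) (by norm_num)
        rw [vlist1, vlist2, smul_pt, smul_pt, add_pt, pt_eq_iff]; push_cast; norm_num
      · -- (0,1) at t = 4/3
        push_cast
        refine vlist_cover (4/3) 1 (by norm_num [Nat.floor_eq_iff]) 0 1 ?_ (by norm_num) (by norm_num)
        rw [vlist1, vlist2, smul_pt, smul_pt, add_pt, pt_eq_iff]; push_cast; norm_num
      · -- (0,2) at t = 5/3
        push_cast
        refine vlist_cover (5/3) 1 (by norm_num [Nat.floor_eq_iff]) 0 2 ?_ (by norm_num) (by norm_num)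
        rw [vlist1, vlist2, smul_pt, smul_pt, add_pt, pt_eq_iff]; push_cast; norm_num
      · -- (1,0) at t = 4
        push_cast
        refine vlist_cover 4 4 (by norm_num) 1 0 ?_ (by norm_num) (by norm_num)
        rw [vlist4, vlist5, smul_pt, smul_pt, add_pt, pt_eq_iff]; push_cast; norm_num
      · -- (1,1) at t = 1/2
        push_cast
        refine vlist_cover (1/2) 0 (by norm_num [Nat.floor_eq_iff']) 1 1 ?_ (by norm_num) (by norm_num)
        rw [vlist0, vlist1, smul_pt, smul_pt, add_pt, pt_eq_iff]; push_cast; norm_num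
      · -- (1,2) at t = 7/3
        push_cast
        refine vlist_cover (7/3) 2 (by norm_num [Nat.floor_eq_iff]) 1 2 ?_ (by norm_num) (by norm_num)
        rw [vlist2, vlist3, smul_pt, smul_pt, add_pt, pt_eq_iff]; push_cast; norm_num
      · -- (2,0) at t = 7/2
        push_cast
        refine vlist_cover (7/2) 3 (by norm_num [Nat.floor_eq_iff]) 2 0 ?_ (by norm_num) (by norm_num)
        rw [vlist3, vlist4, smul_pt, smul_pt, add_pt, pt_eq_iff]; push_cast; norm_num
      · -- (2,1) at t = 8/3
        push_cast
        refine vlist_cover (8/3) 2 (by norm_num [Nat.floor_eq_iff]) 2 1 ?_ (by norm_num) (by norm_num)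
        rw [vlist2, vlist3, smul_pt, smul_pt, add_pt, pt_eq_iff]; push_cast; norm_num
      · -- (2,2) at t = 0
        push_cast
        refine vlist_cover 0 0 (by norm_num) 2 2 ?_ (by norm_num) (by norm_num)
        rw [vlist0, vlist1, smul_pt, smul_pt, add_pt, pt_eq_iff]; push_cast; norm_num
  · -- length
    have d0 : dist (vlist 0) (vlist 1) = 2 * Real.sqrt 2 := by
      rw [vlist0, vlist1, dist_pt,
        show ((2:ℝ)-0)^2 + (2-0)^2 = 2^2 * 2 by norm_num,
        Real.sqrt_mul (by positivity), Real.sqrt_sq (by norm_num)]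
    have d1 : dist (vlist 1) (vlist 2) = 3 := by
      rw [vlist1, vlist2, dist_pt, show ((0:ℝ)-0)^2 + (0-3)^2 = 3^2 by norm_num,
        Real.sqrt_sq (by norm_num)]
    have d2 : dist (vlist 2) (vlist 3) = 3 * Real.sqrt 2 := by
      rw [vlist2, vlist3, dist_pt,
        show ((0:ℝ)-3)^2 + (3-0)^2 = 3^2 * 2 by norm_num,
        Real.sqrt_mul (by positivity), Real.sqrt_sq (by norm_num)]
    have d3 : dist (vlist 3) (vlist 4) = 2 := by
      rw [vlist3, vlist4, dist_pt, show ((3:ℝ)-1)^2 + (0-0)^2 = 2^2 by norm_num,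
        Real.sqrt_sq (by norm_num)]
    rw [chainLength, Finset.sum_range_succ, Finset.sum_range_succ, Finset.sum_range_succ,
      Finset.sum_range_succ, Finset.sum_range_zero, d0, d1, d2, d3]
    ring
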